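/- arXiv:math/0503478 — 2 statements merged into one kernel-verified Lean document; each statement's English description precedes it below -/
import Mathlib

section
/- Under the simultaneous Doeblin condition there exist β ∈ (0,1) and β₀ > 0 such that P_x^π[T ≥ n] ≤ β₀ βⁿ for every x ∈ S, every policy π ∈ 𝒫 and every n ∈ ℕ. -/
open scoped Classical BigOperators ENNReal

namespace RiskSensitive

/-- A (history-dependent, randomized) policy for a finite MDP: given the past
(chronological list of (state, action) pairs) and the current state, it assigns a
probability weight to each action, concentrated on the admissible actions. -/
structure Policy (S A : Type*) [Fintype S] [Fintype A] (Adm : S → Finset A) where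
  toFun : List (S × A) → S → A → ℝ
  nonneg : ∀ h s a, 0 ≤ toFun h s a
  sum_one : ∀ h s, ∑ a, toFun h s a = 1
  supp : ∀ h s a, a ∉ Adm s → toFun h s a = 0

variable {S A : Type*} [Fintype S] [Fintype A]
variable (Adm : S → Finset A) (p : S → A → S → ℝ) (C : S → A → ℝ) (lam : ℝ)

/-- Probability of a finite trajectory (list of (action, next-state) pairs), given the
history so far and the current state. -/
noncomputable def pathProbAux (π : Policy S A Adm) :
    List (S × A) → S → List (A × S) → ℝ
  | _, _, [] => 1
  | hist, x, (a, y) :: rest =>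
      π.toFun hist x a * p x a y * pathProbAux π (hist ++ [(x, a)]) y rest

/-- `pathProb π x l` is `P_x^π[A_0 = a_0, X_1 = y_1, …]` for `l = [(a_0,y_1),…]`. -/
noncomputable def pathProb (π : Policy S A Adm) (x : S) (l : List (A × S)) : ℝ :=
  pathProbAux Adm p π [] x l

/-- Probability of a cylinder event depending on the first `n` (action, next-state) pairs. -/
noncomputable def cylProb (π : Policy S A Adm) (x : S) (n : ℕ)
    (E : (Fin n → A × S) → Prop) : ℝ :=
  ∑ v : Fin n → A × S, if E v then pathProb Adm p π x (List.ofFn v) else 0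

/-- The state `X_t` along the trajectory encoded by `l`, starting from `x`. -/
def stateAt (x : S) (l : List (A × S)) (t : ℕ) : S :=
  (l.take t).foldl (fun _ q => q.2) x

/-- The final state of the finite trajectory `l` started at `x`. -/
def lastState (x : S) (l : List (A × S)) : S :=
  l.foldl (fun _ q => q.2) x

/-- `Σ_t w(X_t, A_t)` along the finite trajectory `l` started at `x`. -/
def costSum (w : S → A → ℝ) : S → List (A × S) → ℝ
  | _, [] => 0
  | x, (a, y) :: rest => w x a + costSum w y rest

/-- `J_n(λ,π,x) = (1/λ) log E_x^π[exp(λ Σ_{t<n} C(X_t,A_t))]`. -/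
noncomputable def Jn (π : Policy S A Adm) (x : S) (n : ℕ) : ℝ :=
  (1 / lam) * Real.log (∑ v : Fin n → A × S,
    pathProb Adm p π x (List.ofFn v) * Real.exp (lam * costSum C x (List.ofFn v)))

/-- The risk-sensitive average cost `J(λ,π,x) = limsup_n J_n(λ,π,x)/n`. -/
noncomputable def Javg (π : Policy S A Adm) (x : S) : ℝ :=
  Filter.limsup (fun n : ℕ => Jn Adm p C lam π x n / n) Filter.atTop

/-- Optimal risk-sensitive average cost `J*(λ,x)`. -/
noncomputable def Jopt (x : S) : ℝ :=
  ⨅ π : Policy S A Adm, Javg Adm p C lam π x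

/-- `π` is `ε`-optimal at `x`. -/
def EpsOptimalAt (π : Policy S A Adm) (x : S) (ε : ℝ) : Prop :=
  Javg Adm p C lam π x ≤ Jopt Adm p C lam x + ε

/-- `FirstExit Q v` : the trajectory `v` leaves `{Q}` for the first time exactly at its
last step, i.e. the exit time of `Q` equals `n`. -/
def FirstExit (Q : S → Prop) {n : ℕ} (v : Fin n → A × S) : Prop :=
  0 < n ∧ (∀ t : Fin n, (t : ℕ) + 1 < n → Q (v t).2) ∧
    ∀ t : Fin n, (t : ℕ) + 1 = n → ¬ Q (v t).2

/-- `E_x^π[ exp(Σ_{t<τ} w(X_t,A_t)) ]` where `τ = min{n ≥ 1 : ¬ Q (X_n)}` is the first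
exit time from `Q` (the contribution of `[τ = ∞]` is null when `τ < ∞` a.s.). -/
noncomputable def EexitExp (π : Policy S A Adm) (x : S) (Q : S → Prop)
    (w : S → A → ℝ) : ℝ≥0∞ :=
  ∑' n : ℕ, ∑ v : Fin n → A × S,
    if FirstExit Q v then
      ENNReal.ofReal (pathProb Adm p π x (List.ofFn v) *
        Real.exp (costSum w x (List.ofFn v)))
    else 0

/-- `E_x^π[ exp(Σ_{t<T} w(X_t,A_t)) ]` with `T` the first positive arrival time to `z`. -/
noncomputable def EhitExp (π : Policy S A Adm) (x z : S) (w : S → A → ℝ) : ℝ≥0∞ :=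
  EexitExp Adm p π x (fun y => y ≠ z) w

/-- `E_x^π[T]`, the expected first positive arrival time to `z`, computed as
`Σ_{n≥0} P_x^π[T > n]`. -/
noncomputable def ExpT (π : Policy S A Adm) (x z : S) : ℝ≥0∞ :=
  ∑' n : ℕ, ENNReal.ofReal
    (cylProb Adm p π x n (fun v => ∀ t : Fin n, (v t).2 ≠ z))

/-- `P_x^π[T > n]`, the probability that `z` is not visited during the first `n` steps. -/
noncomputable def survProb (π : Policy S A Adm) (x z : S) (n : ℕ) : ℝ :=
  cylProb Adm p π x n (fun v => ∀ t : Fin n, (v t).2 ≠ z)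

/-- The stationary policy induced by a choice function `f ∈ 𝔽`. -/
noncomputable def stationary (f : S → A) (hf : ∀ s, f s ∈ Adm s) : Policy S A Adm where
  toFun := fun _ s a => if a = f s then 1 else 0
  nonneg := by intro h s a; split <;> norm_num
  sum_one := by intro h s; simp
  supp := by
    intro h s a ha
    rw [if_neg]
    intro hEq
    exact ha (hEq ▸ hf s)

/-- The simultaneous Doeblin condition: `E_x^f[T] ≤ M` for every state `x` and every
stationary policy `f`, where `T` is the first positive arrival time to `z`. -/
def Doeblin (z : S) (M : ℝ) : Prop :=
  0 < M ∧ ∀ (x : S) (f : S → A) (hf : ∀ s, f s ∈ Adm s),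
    ExpT Adm p (stationary Adm f hf) x z ≤ ENNReal.ofReal M

/-- `B_g(x) = {a ∈ A(x) : g(x) = max{g(y) : p_{xy}(a) > 0}}`. -/
def Bg (g : S → ℝ) (x : S) : Set A :=
  {a | a ∈ Adm x ∧ g x = sSup (g '' {y | 0 < p x a y})}

/-- The family `𝒢` of functions characterizing `J*(λ,·)`. -/
def Gclass : Set (S → ℝ) :=
  {g | (∀ x, g x = sInf ((fun a => sSup (g '' {y | 0 < p x a y})) '' (Adm x : Set A))) ∧
    ∃ h : S → ℝ, ∀ x,
      sInf ((fun a => Real.exp (lam * C x a) * ∑ y, p x a y * Real.exp (lam * h y)) ''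
        Bg Adm p g x) ≤ Real.exp (lam * g x + lam * h x)}

/-- The class `𝒫*` of policies which always select actions in `B*(X_t)`. -/
def Pstar : Set (Policy S A Adm) :=
  {π | ∀ (x : S) (t : ℕ),
    cylProb Adm p π x (t + 1)
      (fun v => (v (Fin.last t)).1 ∈
        Bg Adm p (Jopt Adm p C lam) (stateAt x (List.ofFn v) t)) = 1}

/-- The deviation function
`h(x) = inf_{π ∈ 𝒫*} (1/λ) log E_x^π[exp(λα Σ_{t<T}(C(X_t,A_t) − J*(λ,X_t)))]`. -/
noncomputable def hdev (z : S) (α : ℝ) (x : S) : EReal :=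
  ⨅ π ∈ Pstar Adm p C lam, ((lam⁻¹ : ℝ) : EReal) *
    ENNReal.log (EhitExp Adm p π x z
      (fun s a => lam * α * (C s a - Jopt Adm p C lam s)))

/-- `ψ(ε) = (1/λ) inf_{δ∈𝒫*} log E_z^δ[exp(λ Σ_{t<T}(C(X_t,A_t) − γ₀ − 2ε))]`. -/
noncomputable def psi (z : S) (ε : ℝ) : EReal :=
  ((lam⁻¹ : ℝ) : EReal) * ⨅ π ∈ Pstar Adm p C lam,
    ENNReal.log (EhitExp Adm p π z z
      (fun s a => lam * (C s a - Jopt Adm p C lam z - 2 * ε)))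

/-- `ξ₀ = −(1−α) log β / (λα)`. -/
noncomputable def xi0 (α β : ℝ) : ℝ := -((1 - α) * Real.log β) / (lam * α)

/-- `ξ₁`: 1 if `J*(λ,·)` is constant, otherwise the minimum gap between distinct
values of `J*(λ,·)`. -/
noncomputable def xi1 : ℝ :=
  if ∀ u v : S, Jopt Adm p C lam u = Jopt Adm p C lam v then 1
  else sInf {d | ∃ u v : S, Jopt Adm p C lam u < Jopt Adm p C lam v ∧
    d = Jopt Adm p C lam v - Jopt Adm p C lam u}

/-- `ξ = min{ξ₀, ξ₁}`. -/
noncomputable def xi (α β : ℝ) : ℝ := min (xi0 lam α β) (xi1 Adm p C lam)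

/-- The shifted policy obtained by prefixing the fixed history `pre`. -/
def shiftPolicy (π : Policy S A Adm) (pre : List (S × A)) : Policy S A Adm where
  toFun := fun h s a => π.toFun (pre ++ h) s a
  nonneg := fun h s a => π.nonneg _ s a
  sum_one := fun h s => π.sum_one _ s
  supp := fun h s a ha => π.supp _ s a ha

/-- The history (list of (state, action) pairs) along the trajectory `l` started at `x`. -/
def histOf : S → List (A × S) → List (S × A)
  | _, [] => []
  | x, (a, y) :: rest => (x, a) :: histOf y rest


/-!
The value iteration `u₀ = 1`, `u_{n+1}(x) = max_{a ∈ A(x)} Σ_{y ≠ z} p_{xy}(a) u_n(y)` dominates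
`P_x^π[T > n]` for every policy `π` and is submultiplicative: `u_{n+m} ≤ (max u_m) u_n`. So it
suffices to find a horizon `m` with `u_m < 1` everywhere. If there is none, then by finiteness some
state has `u_m = 1` for all `m`, and every such state has an action that avoids `z` and leads only
to such states. The stationary policy choosing these actions never reaches `z`, so `E[T] = ∞`,
contradicting the Doeblin condition.
-/

theorem sum_mul_eq_one_sub {ι : Type*} [Fintype ι] {q : ι → ℝ} (hq1 : ∑ i, q i = 1)
    (v : ι → ℝ) : ∑ i, q i * v i = 1 - ∑ i, q i * (1 - v i) := by
  simp only [mul_sub, mul_one, Finset.sum_sub_distrib, hq1, sub_sub_cancel]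

theorem sum_mul_le_one {ι : Type*} [Fintype ι] {q v : ι → ℝ} (hq0 : ∀ i, 0 ≤ q i)
    (hq1 : ∑ i, q i = 1) (hv : ∀ i, v i ≤ 1) : ∑ i, q i * v i ≤ 1 := by
  rw [sum_mul_eq_one_sub hq1]
  exact sub_le_self _ (Finset.sum_nonneg fun i _ => mul_nonneg (hq0 i) (sub_nonneg.2 (hv i)))

theorem sum_mul_eq_one_iff {ι : Type*} [Fintype ι] {q v : ι → ℝ} (hq0 : ∀ i, 0 ≤ q i)
    (hq1 : ∑ i, q i = 1) (hv : ∀ i, v i ≤ 1) :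
    ∑ i, q i * v i = 1 ↔ ∀ i, 0 < q i → v i = 1 := by
  rw [sum_mul_eq_one_sub hq1, sub_eq_self, Finset.sum_eq_zero_iff_of_nonneg
    fun i _ => mul_nonneg (hq0 i) (sub_nonneg.2 (hv i))]
  refine forall_congr' fun i => ?_
  rw [(hq0 i).lt_iff_ne', mul_eq_zero, sub_eq_zero, eq_comm (a := (1 : ℝ))]
  simp only [Finset.mem_univ, true_implies, or_iff_not_imp_left]

theorem Finite.exists_forall_of_antitone {α : Type*} [Finite α] {P : α → ℕ → Prop}
    (hP : ∀ a, Antitone (P a)) (h : ∀ m, ∃ a, P a m) : ∃ a, ∀ m, P a m := by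
  by_contra! hcon
  choose m hm using hcon
  obtain ⟨N, hN⟩ := (Set.finite_range m).bddAbove
  obtain ⟨a, ha⟩ := h N
  exact hm a (hP a (hN ⟨a, rfl⟩) ha)

theorem pow_div_le_inv_mul_rpow_pow {ρ : ℝ} (hρ0 : 0 < ρ) (hρ1 : ρ ≤ 1) {m : ℕ} (hm : m ≠ 0)
    (n : ℕ) : ρ ^ (n / m) ≤ ρ⁻¹ * (ρ ^ (m⁻¹ : ℝ)) ^ (n + 1) := by
  set β := ρ ^ (m⁻¹ : ℝ)
  have hβm : β ^ m = ρ := Real.rpow_inv_natCast_pow hρ0.le hm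
  have hβ0 : 0 ≤ β := Real.rpow_nonneg hρ0.le _
  have hβ1 : β ≤ 1 := Real.rpow_le_one hρ0.le hρ1 (by positivity)
  rw [le_inv_mul_iff₀ hρ0]
  calc ρ * ρ ^ (n / m) = β ^ (m * (n / m + 1)) := by rw [pow_mul, hβm, pow_succ']
    _ ≤ β ^ (n + 1) := pow_le_pow_of_le_one hβ0 hβ1 (Nat.lt_mul_div_succ n (Nat.pos_of_ne_zero hm))

theorem Policy.ext {π π' : Policy S A Adm} (h : π.toFun = π'.toFun) : π = π' := by
  cases π; cases π'; cases h; rfl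

theorem Policy.sum_mul_le (π : Policy S A Adm) (hist : List (S × A)) (x : S) {g : A → ℝ}
    {c : ℝ} (hg : ∀ a ∈ Adm x, g a ≤ c) : ∑ a, π.toFun hist x a * g a ≤ c :=
  calc ∑ a, π.toFun hist x a * g a ≤ ∑ a, π.toFun hist x a * c := by
        refine Finset.sum_le_sum fun a _ => ?_
        by_cases ha : a ∈ Adm x
        · exact mul_le_mul_of_nonneg_left (hg a ha) (π.nonneg _ _ _)
        · simp [π.supp _ _ _ ha]
    _ = c := by rw [← Finset.sum_mul, π.sum_one, one_mul]

theorem shiftPolicy_shiftPolicy (π : Policy S A Adm) (pre pre' : List (S × A)) :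
    shiftPolicy Adm (shiftPolicy Adm π pre) pre' = shiftPolicy Adm π (pre ++ pre') :=
  Policy.ext Adm <| by simp [shiftPolicy]

theorem shiftPolicy_stationary (f : S → A) (hf : ∀ s, f s ∈ Adm s) (pre : List (S × A)) :
    shiftPolicy Adm (stationary Adm f hf) pre = stationary Adm f hf :=
  Policy.ext Adm rfl

theorem pathProbAux_eq_pathProb_shiftPolicy (π : Policy S A Adm) (pre : List (S × A)) (x : S)
    (l : List (A × S)) :
    pathProbAux Adm p π pre x l = pathProb Adm p (shiftPolicy Adm π pre) x l := by
  induction l generalizing π pre x with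
  | nil => rfl
  | cons q rest ih =>
      rw [pathProb, pathProbAux, pathProbAux, ih, ih, List.nil_append, shiftPolicy_shiftPolicy]
      simp [shiftPolicy]

theorem survProb_zero (π : Policy S A Adm) (x z : S) : survProb Adm p π x z 0 = 1 := by
  simp [survProb, cylProb, pathProb, pathProbAux]

theorem survProb_succ (π : Policy S A Adm) (x z : S) (n : ℕ) :
    survProb Adm p π x z (n + 1) = ∑ a, π.toFun [] x a * ∑ y, p x a y *
      Function.update (fun y => survProb Adm p (shiftPolicy Adm π [(x, a)]) y z n) z 0 y := by
  rw [survProb, cylProb, ← (Fin.consEquiv fun _ => A × S).sum_comp, Fintype.sum_prod_type,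
    Fintype.sum_prod_type]
  refine Finset.sum_congr rfl fun a _ => ?_
  rw [Finset.mul_sum]
  refine Finset.sum_congr rfl fun y _ => ?_
  by_cases hy : y = z
  · subst hy
    simp [Fin.forall_fin_succ]
  · simp only [Function.update_of_ne hy, survProb, cylProb, Finset.mul_sum, ← mul_assoc]
    refine Finset.sum_congr rfl fun w _ => ?_
    simp only [List.ofFn_succ, Fin.forall_fin_succ, Fin.consEquiv_apply, Fin.cons_zero,
      Fin.cons_succ, ne_eq, hy, not_false_eq_true, true_and]
    rw [pathProb, pathProbAux, List.nil_append, pathProbAux_eq_pathProb_shiftPolicy]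
    split_ifs <;> simp

theorem survProb_stationary_succ (f : S → A) (hf : ∀ s, f s ∈ Adm s) (x z : S) (n : ℕ) :
    survProb Adm p (stationary Adm f hf) x z (n + 1) = ∑ y, p x (f x) y *
      Function.update (fun y => survProb Adm p (stationary Adm f hf) y z n) z 0 y := by
  simp only [survProb_succ, shiftPolicy_stationary]
  simp [stationary]

theorem ExpT_eq_top_of_survProb_eq_one {π : Policy S A Adm} {x z : S}
    (h : ∀ n, survProb Adm p π x z n = 1) : ExpT Adm p π x z = ⊤ := by
  change ∑' n, ENNReal.ofReal (survProb Adm p π x z n) = ⊤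
  simp only [h, ENNReal.ofReal_one]
  exact ENNReal.tsum_const_eq_top_of_ne_zero one_ne_zero

def IsTransitionProb : Prop :=
  ∀ x, ∀ a ∈ Adm x, (∀ y, 0 ≤ p x a y) ∧ ∑ y, p x a y = 1

/-- The Bellman operator of the problem of avoiding `z`: one step of the chain, killed on
entering `z`, followed by the best action. -/
noncomputable def avoidOp (hA : ∀ x, (Adm x).Nonempty) (z : S) (v : S → ℝ) (x : S) : ℝ :=
  (Adm x).sup' (hA x) fun a => ∑ y, p x a y * Function.update v z 0 y

noncomputable def maxSurvProb (hA : ∀ x, (Adm x).Nonempty) (z : S) (n : ℕ) : S → ℝ :=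
  (avoidOp Adm p hA z)^[n] 1

section ValueIteration

variable (hA : ∀ x, (Adm x).Nonempty) {z : S}

theorem sum_le_avoidOp (v : S → ℝ) {x : S} {a : A} (ha : a ∈ Adm x) :
    ∑ y, p x a y * Function.update v z 0 y ≤ avoidOp Adm p hA z v x :=
  Finset.le_sup' (fun a => ∑ y, p x a y * Function.update v z 0 y) ha

theorem avoidOp_mono (hp : IsTransitionProb Adm p) : Monotone (avoidOp Adm p hA z) :=
  fun _ w hvw x => Finset.sup'_le _ _ fun a ha =>
    (Finset.sum_le_sum fun y _ => mul_le_mul_of_nonneg_left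
      (update_le_update_iff.2 ⟨le_rfl, fun j _ => hvw j⟩ y) ((hp x a ha).1 y)).trans
    (sum_le_avoidOp Adm p hA w ha)

theorem avoidOp_le_one (hp : IsTransitionProb Adm p) {v : S → ℝ} (hv : v ≤ 1) :
    avoidOp Adm p hA z v ≤ 1 :=
  fun x => Finset.sup'_le _ _ fun a ha => sum_mul_le_one (hp x a ha).1 (hp x a ha).2
    (update_le_iff.2 ⟨zero_le_one, fun j _ => hv j⟩)

theorem avoidOp_smul_le {c : ℝ} (hc : 0 ≤ c) (v : S → ℝ) :
    avoidOp Adm p hA z (c • v) ≤ c • avoidOp Adm p hA z v := by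
  intro x
  refine Finset.sup'_le _ _ fun a ha => ?_
  have hupd : ∀ y, Function.update (c • v) z 0 y = c * Function.update v z 0 y := by
    intro y
    by_cases hy : y = z <;> simp [hy]
  calc ∑ y, p x a y * Function.update (c • v) z 0 y
      = c * ∑ y, p x a y * Function.update v z 0 y := by
        rw [Finset.mul_sum]
        exact Finset.sum_congr rfl fun y _ => by rw [hupd]; ring
    _ ≤ c * avoidOp Adm p hA z v x := mul_le_mul_of_nonneg_left (sum_le_avoidOp Adm p hA v ha) hc

theorem maxSurvProb_succ (n : ℕ) :
    maxSurvProb Adm p hA z (n + 1) = avoidOp Adm p hA z (maxSurvProb Adm p hA z n) :=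
  Function.iterate_succ_apply' _ _ _

theorem maxSurvProb_antitone (hp : IsTransitionProb Adm p) :
    Antitone (maxSurvProb Adm p hA z) :=
  (avoidOp_mono Adm p hA hp).antitone_iterate_of_map_le (avoidOp_le_one Adm p hA hp le_rfl)

theorem maxSurvProb_le_one (hp : IsTransitionProb Adm p) (n : ℕ) :
    maxSurvProb Adm p hA z n ≤ 1 :=
  maxSurvProb_antitone Adm p hA hp (Nat.zero_le n)

theorem maxSurvProb_eq_one_of_le (hp : IsTransitionProb Adm p) {m n : ℕ} (hmn : m ≤ n) {x : S}
    (h : maxSurvProb Adm p hA z n x = 1) : maxSurvProb Adm p hA z m x = 1 :=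
  (maxSurvProb_le_one Adm p hA hp m x).antisymm
    (h.symm.trans_le (maxSurvProb_antitone Adm p hA hp hmn x))

theorem survProb_le_maxSurvProb (hp : IsTransitionProb Adm p) (π : Policy S A Adm) (x : S)
    (n : ℕ) : survProb Adm p π x z n ≤ maxSurvProb Adm p hA z n x := by
  induction n generalizing π x with
  | zero => rw [survProb_zero]; rfl
  | succ n ih =>
      rw [survProb_succ, maxSurvProb_succ]
      refine π.sum_mul_le Adm [] x fun a ha => ?_
      refine (Finset.sum_le_sum fun y _ => mul_le_mul_of_nonneg_left ?_ ((hp x a ha).1 y)).trans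
        (sum_le_avoidOp Adm p hA _ ha)
      exact update_le_update_iff.2 ⟨le_rfl, fun j _ => ih _ j⟩ y

theorem maxSurvProb_add_le (hp : IsTransitionProb Adm p) {m : ℕ} {c : ℝ} (hc : 0 ≤ c)
    (hm : ∀ x, maxSurvProb Adm p hA z m x ≤ c) (n : ℕ) :
    maxSurvProb Adm p hA z (n + m) ≤ c • maxSurvProb Adm p hA z n := by
  induction n with
  | zero => intro x; simpa [maxSurvProb] using hm x
  | succ n ih =>
      rw [Nat.succ_add, maxSurvProb_succ, maxSurvProb_succ]
      exact (avoidOp_mono Adm p hA hp ih).trans (avoidOp_smul_le Adm p hA hc _)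

theorem maxSurvProb_le_pow_div (hp : IsTransitionProb Adm p) {m : ℕ} {ρ : ℝ} (hρ : 0 ≤ ρ)
    (hm : ∀ x, maxSurvProb Adm p hA z m x ≤ ρ) (n : ℕ) (x : S) :
    maxSurvProb Adm p hA z n x ≤ ρ ^ (n / m) := by
  have hmul : ∀ k x, maxSurvProb Adm p hA z (m * k) x ≤ ρ ^ k := by
    intro k
    induction k with
    | zero => intro x; simp [maxSurvProb]
    | succ k ih =>
        intro x
        calc maxSurvProb Adm p hA z (m * k + m) x ≤ ρ * maxSurvProb Adm p hA z (m * k) x :=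
              maxSurvProb_add_le Adm p hA hp hρ hm _ x
          _ ≤ ρ ^ (k + 1) := by rw [pow_succ']; exact mul_le_mul_of_nonneg_left (ih x) hρ
  exact (maxSurvProb_antitone Adm p hA hp (Nat.mul_div_le n m) x).trans (hmul _ x)

theorem exists_action_of_maxSurvProb_succ_eq_one (hp : IsTransitionProb Adm p) {m : ℕ}
    {x : S} (h : maxSurvProb Adm p hA z (m + 1) x = 1) :
    ∃ a ∈ Adm x, ∀ y, 0 < p x a y → y ≠ z ∧ maxSurvProb Adm p hA z m y = 1 := by
  obtain ⟨a, ha, hmax⟩ := Finset.exists_mem_eq_sup' (hA x)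
    fun a => ∑ y, p x a y * Function.update (maxSurvProb Adm p hA z m) z 0 y
  rw [maxSurvProb_succ, avoidOp, hmax, sum_mul_eq_one_iff (hp x a ha).1 (hp x a ha).2
    (update_le_iff.2 ⟨zero_le_one, fun j _ => maxSurvProb_le_one Adm p hA hp m j⟩)] at h
  refine ⟨a, ha, fun y hy => ?_⟩
  by_cases hyz : y = z
  · simpa [hyz] using h y hy
  · exact ⟨hyz, by simpa [hyz] using h y hy⟩

theorem exists_action_of_forall_maxSurvProb_eq_one (hp : IsTransitionProb Adm p) {x : S}
    (hx : ∀ m, maxSurvProb Adm p hA z m x = 1) :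
    ∃ a ∈ Adm x, ∀ y, 0 < p x a y → y ≠ z ∧ ∀ m, maxSurvProb Adm p hA z m y = 1 := by
  obtain ⟨a, ha⟩ := Finite.exists_forall_of_antitone
    (P := fun a m => a ∈ Adm x ∧ ∀ y, 0 < p x a y → y ≠ z ∧ maxSurvProb Adm p hA z m y = 1)
    (fun a m n hmn h => ⟨h.1, fun y hy => (h.2 y hy).imp_right
      (maxSurvProb_eq_one_of_le Adm p hA hp hmn)⟩)
    (fun m => by
      obtain ⟨a, ha, h⟩ := exists_action_of_maxSurvProb_succ_eq_one Adm p hA hp (hx (m + 1))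
      exact ⟨a, ha, h⟩)
  exact ⟨a, (ha 0).1, fun y hy => ⟨((ha 0).2 y hy).1, fun m => ((ha m).2 y hy).2⟩⟩

end ValueIteration

theorem survProb_stationary_eq_one (hp : IsTransitionProb Adm p) {f : S → A}
    (hf : ∀ s, f s ∈ Adm s) {z : S} {Q : Set S}
    (hQ : ∀ x ∈ Q, ∀ y, 0 < p x (f x) y → y ≠ z ∧ y ∈ Q) (n : ℕ) {x : S} (hx : x ∈ Q) :
    survProb Adm p (stationary Adm f hf) x z n = 1 := by
  induction n generalizing x with
  | zero => exact survProb_zero Adm p _ x z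
  | succ n ih =>
      rw [survProb_stationary_succ, ← (hp x (f x) (hf x)).2]
      refine Finset.sum_congr rfl fun y _ => ?_
      rcases ((hp x (f x) (hf x)).1 y).eq_or_lt with hzero | hpos
      · rw [← hzero, zero_mul]
      · obtain ⟨hyz, hyQ⟩ := hQ x hx y hpos
        rw [Function.update_of_ne hyz, ih hyQ, mul_one]

theorem exists_maxSurvProb_lt_one (hA : ∀ x, (Adm x).Nonempty) (hp : IsTransitionProb Adm p)
    {z : S} {M : ℝ} (hDoe : Doeblin Adm p z M) : ∃ m, ∀ x, maxSurvProb Adm p hA z m x < 1 := by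
  by_contra! h
  obtain ⟨x₀, hx₀⟩ : ∃ x, ∀ m, maxSurvProb Adm p hA z m x = 1 :=
    Finite.exists_forall_of_antitone (fun x m n hmn => maxSurvProb_eq_one_of_le Adm p hA hp hmn)
      fun m => (h m).imp fun x hx => (maxSurvProb_le_one Adm p hA hp m x).antisymm hx
  have hchoice : ∀ x, ∃ a ∈ Adm x, (∀ m, maxSurvProb Adm p hA z m x = 1) →
      ∀ y, 0 < p x a y → y ≠ z ∧ ∀ m, maxSurvProb Adm p hA z m y = 1 := by
    intro x
    by_cases hx : ∀ m, maxSurvProb Adm p hA z m x = 1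
    · obtain ⟨a, ha, hgood⟩ := exists_action_of_forall_maxSurvProb_eq_one Adm p hA hp hx
      exact ⟨a, ha, fun _ => hgood⟩
    · exact ⟨_, (hA x).choose_spec, fun h => absurd h hx⟩
  choose f hf hgood using hchoice
  have hT := ExpT_eq_top_of_survProb_eq_one Adm p fun n =>
    survProb_stationary_eq_one Adm p hp hf hgood n hx₀
  exact ENNReal.ofReal_ne_top (top_le_iff.1 (hT ▸ hDoe.2 x₀ f hf))

/-- under the Doeblin condition the tail of the arrival time to `z` decays
geometrically, uniformly in the initial state and the policy:
`P_x^π[T ≥ n+1] ≤ β₀ β^(n+1)`. -/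
theorem geometric_tail
    (hA : ∀ x, (Adm x).Nonempty)
    (hp : ∀ (x : S), ∀ a ∈ Adm x, (∀ y, 0 ≤ p x a y) ∧ (∑ y, p x a y) = 1)
    (z : S) (M : ℝ) (hDoe : Doeblin Adm p z M) :
    ∃ β ∈ Set.Ioo (0 : ℝ) 1, ∃ β₀ > (0 : ℝ),
      ∀ (x : S) (π : Policy S A Adm) (n : ℕ),
        survProb Adm p π x z n ≤ β₀ * β ^ (n + 1) := by
  obtain ⟨m, hm⟩ := exists_maxSurvProb_lt_one Adm p hA hp hDoe
  have hm0 : m ≠ 0 := by rintro rfl; simpa [maxSurvProb] using hm z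
  have : Nonempty S := ⟨z⟩
  obtain ⟨x₀, hx₀⟩ := Finite.exists_max (maxSurvProb Adm p hA z m)
  set ρ := max (maxSurvProb Adm p hA z m x₀) 2⁻¹
  have hρ0 : 0 < ρ := lt_max_of_lt_right (by norm_num)
  have hρ1 : ρ < 1 := max_lt (hm x₀) (by norm_num)
  refine ⟨ρ ^ (m⁻¹ : ℝ), ⟨Real.rpow_pos_of_pos hρ0 _, Real.rpow_lt_one hρ0.le hρ1 (by positivity)⟩,
    ρ⁻¹, inv_pos.2 hρ0, fun x π n => ?_⟩
  calc survProb Adm p π x z n ≤ maxSurvProb Adm p hA z n x :=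
        survProb_le_maxSurvProb Adm p hA hp π x n
    _ ≤ ρ ^ (n / m) :=
        maxSurvProb_le_pow_div Adm p hA hp hρ0.le (fun y => (hx₀ y).trans (le_max_left _ _)) n x
    _ ≤ ρ⁻¹ * (ρ ^ (m⁻¹ : ℝ)) ^ (n + 1) := pow_div_le_inv_mul_rpow_pow hρ0 hρ1.le hm0 n

end RiskSensitive
end

section
/- Assume the simultaneous Doeblin condition and fix α ∈ (0,1). Let x ∈ S satisfy J*(λ,x) = γ₀ := min_{y∈S} J*(λ,y), and suppose π ∈ 𝒫 is ε-optimal at x where ε ∈ (0, ξ). Then for each r ∈ ℕ, P_x^π[ J*(λ,X_r) = γ₀ ] = 1. -/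
/-! If `π` reaches a state `y` at time `r` with positive probability, then following `π` from
`y` with the observed history as prefix costs at most `J(λ,π,x)`: the first `r` steps add only a
bounded term to `J_{r+m}`, which disappears after dividing by `m`. Hence
`J*(λ,y) ≤ J(λ,π,x) ≤ γ₀ + ε < γ₀ + ξ₁`, and since `ξ₁` is the smallest gap between values of
`J*(λ,·)`, `J*(λ,y) = γ₀`. -/

open scoped Classical BigOperators ENNReal

namespace RiskSensitive

variable {S A : Type*} [Fintype S] [Fintype A]
variable (Adm : S → Finset A) (p : S → A → S → ℝ) (C : S → A → ℝ) (lam : ℝ)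

set_option linter.unusedSectionVars false

open Filter in
lemma limsup_le_limsup_of_le_add_div {a b : ℕ → ℝ} {K c : ℝ}
    (ha : ∀ᶠ n in atTop, |a n| ≤ K) (hb : ∀ᶠ n in atTop, |b n| ≤ K)
    (hab : ∀ᶠ n in atTop, a n ≤ b n + c / n) : limsup a atTop ≤ limsup b atTop := by
  have hc : Tendsto (fun n : ℕ => c / n) atTop (nhds 0) := tendsto_const_div_atTop_nhds_zero_nat c
  have hb_le : IsBoundedUnder (· ≤ ·) atTop b :=
    isBoundedUnder_of_eventually_le (hb.mono fun _ h => (abs_le.1 h).2)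
  have hb_ge : IsBoundedUnder (· ≥ ·) atTop b :=
    isBoundedUnder_of_eventually_ge (hb.mono fun _ h => (abs_le.1 h).1)
  have ha_cobdd : IsCoboundedUnder (· ≤ ·) atTop a :=
    (isBoundedUnder_of_eventually_ge (ha.mono fun _ h => (abs_le.1 h).1)).isCoboundedUnder_le
  calc limsup a atTop ≤ limsup (b + fun n : ℕ => c / n) atTop :=
        limsup_le_limsup hab ha_cobdd (isBoundedUnder_le_add hb_le hc.isBoundedUnder_le)
    _ ≤ limsup b atTop + limsup (fun n : ℕ => c / n) atTop :=
        limsup_add_le hb_ge hb_le hc.isBoundedUnder_ge.isCoboundedUnder_le hc.isBoundedUnder_le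
    _ = limsup b atTop := by rw [hc.limsup_eq, add_zero]

lemma div_le_div_add_of_add_le {J J' K K₀ : ℝ} {m r : ℕ} (hm : 0 < m) (hJ : K₀ + J' ≤ J)
    (hJ' : |J'| ≤ m * K) : J' / m ≤ J / (m + r) + (r * K + |K₀|) / m := by
  obtain ⟨hJ'_lo, hJ'_hi⟩ := abs_le.1 hJ'
  have hm' : (0 : ℝ) < m := Nat.cast_pos.2 hm
  have hr : (0 : ℝ) ≤ r := r.cast_nonneg
  have hK : 0 ≤ K := by nlinarith
  have hnum : r * J' - m * K₀ ≤ (r * K + |K₀|) * (m + r) := by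
    nlinarith [mul_le_mul_of_nonneg_left hJ'_hi hr, mul_nonneg (mul_nonneg hr hr) hK,
      mul_le_mul_of_nonneg_left (neg_le_abs K₀) hm'.le, mul_nonneg hr (abs_nonneg K₀)]
  calc J' / m = (K₀ + J') / (m + r) + (r * J' - m * K₀) / (m * (m + r)) := by
        field_simp
        ring
    _ ≤ J / (m + r) + (r * K + |K₀|) / m := by
        refine add_le_add (by gcongr) ?_
        rw [div_le_div_iff₀ (by positivity) hm']
        nlinarith [mul_le_mul_of_nonneg_right hnum hm'.le]

section Trajectories

variable {Adm p} (π : Policy S A Adm)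

lemma pathProbAux_nonneg (hp : ∀ x, ∀ a ∈ Adm x, ∀ y, 0 ≤ p x a y) :
    ∀ (l : List (A × S)) (hist : List (S × A)) (x : S), 0 ≤ pathProbAux Adm p π hist x l
  | [], _, _ => zero_le_one
  | (a, y) :: rest, hist, x => by
    by_cases ha : a ∈ Adm x
    · exact mul_nonneg (mul_nonneg (π.nonneg _ _ _) (hp x a ha y))
        (pathProbAux_nonneg hp rest _ y)
    · simp [pathProbAux, π.supp _ _ _ ha]

lemma pathProb_nonneg (hp : ∀ x, ∀ a ∈ Adm x, ∀ y, 0 ≤ p x a y) (x : S)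
    (l : List (A × S)) : 0 ≤ pathProb Adm p π x l :=
  pathProbAux_nonneg π hp l [] x

lemma sum_pathProbAux (hp : ∀ x, ∀ a ∈ Adm x, ∑ y, p x a y = 1) (n : ℕ) :
    ∀ (hist : List (S × A)) (x : S),
      ∑ v : Fin n → A × S, pathProbAux Adm p π hist x (List.ofFn v) = 1 := by
  induction n with
  | zero => intro hist x; simp [pathProbAux]
  | succ n ih =>
    intro hist x
    rw [← (Fin.consEquiv fun _ : Fin (n + 1) => A × S).sum_comp, Fintype.sum_prod_type]
    simp only [Fin.consEquiv_apply, List.ofFn_succ, Fin.cons_zero, Fin.cons_succ, pathProbAux,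
      ← Finset.mul_sum, ih, mul_one, Fintype.sum_prod_type]
    calc ∑ a, π.toFun hist x a * ∑ y, p x a y = ∑ a, π.toFun hist x a := by
          refine Finset.sum_congr rfl fun a _ => ?_
          by_cases ha : a ∈ Adm x
          · rw [hp x a ha, mul_one]
          · simp [π.supp _ _ _ ha]
      _ = 1 := π.sum_one _ _

lemma sum_pathProb (hp : ∀ x, ∀ a ∈ Adm x, ∑ y, p x a y = 1) (n : ℕ) (x : S) :
    ∑ v : Fin n → A × S, pathProb Adm p π x (List.ofFn v) = 1 :=
  sum_pathProbAux π hp n [] x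

lemma cylProb_eq_one_of_pathProb_ne_zero (hp : ∀ x, ∀ a ∈ Adm x, ∑ y, p x a y = 1)
    {x : S} {n : ℕ} {E : (Fin n → A × S) → Prop}
    (hE : ∀ v, pathProb Adm p π x (List.ofFn v) ≠ 0 → E v) : cylProb Adm p π x n E = 1 := by
  rw [cylProb, ← sum_pathProb π hp n x]
  refine Finset.sum_congr rfl fun v _ => ?_
  by_cases hv : pathProb Adm p π x (List.ofFn v) = 0
  · simp [hv]
  · simp [hE v hv]

lemma pathProbAux_append_history (pre : List (S × A)) :
    ∀ (l : List (A × S)) (hist : List (S × A)) (x : S),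
      pathProbAux Adm p π (pre ++ hist) x l
        = pathProbAux Adm p (shiftPolicy Adm π pre) hist x l
  | [], _, _ => rfl
  | (a, y) :: rest, hist, x => by
    simp only [pathProbAux, ← pathProbAux_append_history pre rest, List.append_assoc]
    rfl

lemma pathProbAux_append :
    ∀ (l₁ l₂ : List (A × S)) (hist : List (S × A)) (x : S),
      pathProbAux Adm p π hist x (l₁ ++ l₂)
        = pathProbAux Adm p π hist x l₁ *
            pathProbAux Adm p π (hist ++ histOf x l₁) (lastState x l₁) l₂
  | [], l₂, hist, x => by simp [pathProbAux, histOf, lastState]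
  | (a, y) :: rest, l₂, hist, x => by
    simp only [List.cons_append, pathProbAux, pathProbAux_append rest, histOf,
      List.append_assoc, mul_assoc]
    rfl

lemma pathProb_append (l₁ l₂ : List (A × S)) (x : S) :
    pathProb Adm p π x (l₁ ++ l₂)
      = pathProb Adm p π x l₁ *
          pathProb Adm p (shiftPolicy Adm π (histOf x l₁)) (lastState x l₁) l₂ := by
  have hshift := pathProbAux_append_history (p := p) π (histOf x l₁) l₂ [] (lastState x l₁)
  rw [List.append_nil] at hshift
  rw [pathProb, pathProbAux_append, List.nil_append, hshift]
  rfl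

end Trajectories

lemma stateAt_ofFn (x : S) {r : ℕ} (v : Fin r → A × S) :
    stateAt x (List.ofFn v) r = lastState x (List.ofFn v) := by
  rw [stateAt, List.take_of_length_le (List.length_ofFn).le, lastState]

lemma costSum_append (w : S → A → ℝ) :
    ∀ (l₁ l₂ : List (A × S)) (x : S),
      costSum w x (l₁ ++ l₂) = costSum w x l₁ + costSum w (lastState x l₁) l₂
  | [], l₂, x => by simp [costSum, lastState]
  | (a, y) :: rest, l₂, x => by
    simp only [List.cons_append, costSum, costSum_append w rest, add_assoc]
    rfl

lemma abs_costSum_le {w : S → A → ℝ} {K : ℝ} (hK : ∀ s a, |w s a| ≤ K) :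
    ∀ (x : S) (l : List (A × S)), |costSum w x l| ≤ l.length * K
  | _, [] => by simp [costSum]
  | x, (a, y) :: rest => by
    have := abs_costSum_le hK y rest
    simp only [costSum, List.length_cons, Nat.cast_succ]
    linarith [abs_add_le (w x a) (costSum w y rest), hK x a]

def IsTransitionKernel : Prop :=
  ∀ x, ∀ a ∈ Adm x, (∀ y, 0 ≤ p x a y) ∧ ∑ y, p x a y = 1

noncomputable def expCost (π : Policy S A Adm) (x : S) (n : ℕ) : ℝ :=
  ∑ v : Fin n → A × S,
    pathProb Adm p π x (List.ofFn v) * Real.exp (lam * costSum C x (List.ofFn v))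

section AverageCost

variable {Adm p C lam} (π : Policy S A Adm)

lemma Jn_eq_log_expCost (x : S) (n : ℕ) :
    Jn Adm p C lam π x n = 1 / lam * Real.log (expCost Adm p C lam π x n) := rfl

lemma expCost_mem_Icc (hp : IsTransitionKernel Adm p) (hlam : 0 ≤ lam) {K : ℝ}
    (hK : ∀ s a, |C s a| ≤ K) (x : S) (n : ℕ) :
    expCost Adm p C lam π x n ∈
      Set.Icc (Real.exp (-(lam * (n * K)))) (Real.exp (lam * (n * K))) := by
  have hterm : ∀ v : Fin n → A × S, |lam * costSum C x (List.ofFn v)| ≤ lam * (n * K) := by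
    intro v
    rw [abs_mul, abs_of_nonneg hlam]
    exact mul_le_mul_of_nonneg_left (by simpa using abs_costSum_le hK x (List.ofFn v)) hlam
  have hnonneg := pathProb_nonneg π (fun x a ha => (hp x a ha).1) x
  have hsum := sum_pathProb π (fun x a ha => (hp x a ha).2) n x
  constructor
  · calc Real.exp (-(lam * (n * K)))
        = ∑ v : Fin n → A × S, pathProb Adm p π x (List.ofFn v) *
            Real.exp (-(lam * (n * K))) := by rw [← Finset.sum_mul, hsum, one_mul]
      _ ≤ expCost Adm p C lam π x n := Finset.sum_le_sum fun v _ =>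
          mul_le_mul_of_nonneg_left (Real.exp_le_exp.2 (neg_le_of_abs_le (hterm v))) (hnonneg _)
  · calc expCost Adm p C lam π x n
        ≤ ∑ v : Fin n → A × S, pathProb Adm p π x (List.ofFn v) *
            Real.exp (lam * (n * K)) := Finset.sum_le_sum fun v _ =>
          mul_le_mul_of_nonneg_left (Real.exp_le_exp.2 (le_of_abs_le (hterm v))) (hnonneg _)
      _ = Real.exp (lam * (n * K)) := by rw [← Finset.sum_mul, hsum, one_mul]

lemma abs_Jn_le (hp : IsTransitionKernel Adm p) (hlam : 0 < lam) {K : ℝ}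
    (hK : ∀ s a, |C s a| ≤ K) (x : S) (n : ℕ) : |Jn Adm p C lam π x n| ≤ n * K := by
  obtain ⟨hlo, hhi⟩ := expCost_mem_Icc π hp hlam.le hK x n
  have hpos := (Real.exp_pos _).trans_le hlo
  have hlog : |Real.log (expCost Adm p C lam π x n)| ≤ lam * (n * K) :=
    abs_le.2 ⟨(Real.le_log_iff_exp_le hpos).2 hlo, (Real.log_le_iff_le_exp hpos).2 hhi⟩
  rw [Jn_eq_log_expCost, abs_mul, abs_of_pos (one_div_pos.2 hlam)]
  calc 1 / lam * |Real.log (expCost Adm p C lam π x n)| ≤ 1 / lam * (lam * (n * K)) := by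
        gcongr
    _ = n * K := by field_simp

lemma abs_Jn_div_le (hp : IsTransitionKernel Adm p) (hlam : 0 < lam) {K : ℝ}
    (hK : ∀ s a, |C s a| ≤ K) (x : S) {n : ℕ} (hn : n ≠ 0) :
    |Jn Adm p C lam π x n / n| ≤ K := by
  rw [abs_div, Nat.abs_cast, div_le_iff₀ (by positivity), mul_comm]
  exact abs_Jn_le π hp hlam hK x n

lemma mul_expCost_shiftPolicy_le (hp : IsTransitionKernel Adm p) (x : S) {r : ℕ}
    (v₀ : Fin r → A × S) (m : ℕ) :
    pathProb Adm p π x (List.ofFn v₀) * Real.exp (lam * costSum C x (List.ofFn v₀)) *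
        expCost Adm p C lam (shiftPolicy Adm π (histOf x (List.ofFn v₀)))
          (lastState x (List.ofFn v₀)) m
      ≤ expCost Adm p C lam π x (r + m) := by
  have hnonneg := pathProb_nonneg π (fun x a ha => (hp x a ha).1) x
  rw [expCost, expCost, ← (Fin.appendEquiv r m).sum_comp, Fintype.sum_prod_type,
    Finset.mul_sum]
  refine (Finset.sum_congr rfl fun w _ => ?_).trans_le <|
    Finset.single_le_sum (fun u _ => Finset.sum_nonneg fun w _ =>
      mul_nonneg (hnonneg _) (Real.exp_pos _).le) (Finset.mem_univ v₀)
  change _ = pathProb Adm p π x (List.ofFn (Fin.append v₀ w)) *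
    Real.exp (lam * costSum C x (List.ofFn (Fin.append v₀ w)))
  rw [List.ofFn_fin_append, pathProb_append, costSum_append, mul_add,
    Real.exp_add]
  ring

lemma Jn_add_le (hp : IsTransitionKernel Adm p) (hlam : 0 < lam) {K : ℝ}
    (hK : ∀ s a, |C s a| ≤ K) (x : S) {r : ℕ} (v₀ : Fin r → A × S)
    (hv₀ : 0 < pathProb Adm p π x (List.ofFn v₀)) (m : ℕ) :
    1 / lam * Real.log (pathProb Adm p π x (List.ofFn v₀) *
        Real.exp (lam * costSum C x (List.ofFn v₀)))
      + Jn Adm p C lam (shiftPolicy Adm π (histOf x (List.ofFn v₀)))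
          (lastState x (List.ofFn v₀)) m
      ≤ Jn Adm p C lam π x (r + m) := by
  have hprefix := mul_pos hv₀ (Real.exp_pos (lam * costSum C x (List.ofFn v₀)))
  have hshift := (Real.exp_pos _).trans_le (expCost_mem_Icc
    (shiftPolicy Adm π (histOf x (List.ofFn v₀))) hp hlam.le hK (lastState x (List.ofFn v₀)) m).1
  rw [Jn_eq_log_expCost, Jn_eq_log_expCost, ← mul_add, ← Real.log_mul hprefix.ne' hshift.ne']
  gcongr
  exact mul_expCost_shiftPolicy_le π hp x v₀ m

lemma neg_le_Javg (hp : IsTransitionKernel Adm p) (hlam : 0 < lam) {K : ℝ}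
    (hK : ∀ s a, |C s a| ≤ K) (x : S) : -K ≤ Javg Adm p C lam π x := by
  have hbound : ∀ᶠ n : ℕ in Filter.atTop, |Jn Adm p C lam π x n / n| ≤ K :=
    (Filter.eventually_ne_atTop 0).mono fun _ hn => abs_Jn_div_le π hp hlam hK x hn
  exact Filter.le_limsup_of_frequently_le (hbound.mono fun _ h => (abs_le.1 h).1).frequently
    (Filter.isBoundedUnder_of_eventually_le (hbound.mono fun _ h => (abs_le.1 h).2))

lemma Jopt_le_Javg (hp : IsTransitionKernel Adm p) (hlam : 0 < lam) {K : ℝ}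
    (hK : ∀ s a, |C s a| ≤ K) (x : S) : Jopt Adm p C lam x ≤ Javg Adm p C lam π x :=
  ciInf_le ⟨-K, Set.forall_mem_range.2 fun π' => neg_le_Javg π' hp hlam hK x⟩ π

lemma Javg_shiftPolicy_le (hp : IsTransitionKernel Adm p) (hlam : 0 < lam) {K : ℝ}
    (hK : ∀ s a, |C s a| ≤ K) (x : S) {r : ℕ} (v₀ : Fin r → A × S)
    (hv₀ : 0 < pathProb Adm p π x (List.ofFn v₀)) :
    Javg Adm p C lam (shiftPolicy Adm π (histOf x (List.ofFn v₀)))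
        (lastState x (List.ofFn v₀)) ≤ Javg Adm p C lam π x := by
  set π' := shiftPolicy Adm π (histOf x (List.ofFn v₀))
  set y := lastState x (List.ofFn v₀)
  set K₀ := 1 / lam * Real.log (pathProb Adm p π x (List.ofFn v₀) *
    Real.exp (lam * costSum C x (List.ofFn v₀)))
  calc Javg Adm p C lam π' y
        = Filter.limsup (fun m : ℕ => Jn Adm p C lam π' y m / m) .atTop := rfl
    _ ≤ Filter.limsup (fun m : ℕ => Jn Adm p C lam π x (m + r) / ↑(m + r)) .atTop := by
        refine limsup_le_limsup_of_le_add_div (c := r * K + |K₀|)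
          ((Filter.eventually_ne_atTop 0).mono fun _ hm => abs_Jn_div_le π' hp hlam hK y hm)
          ((Filter.eventually_ne_atTop 0).mono fun m hm =>
            abs_Jn_div_le π hp hlam hK x (n := m + r) (by omega)) ?_
        filter_upwards [Filter.eventually_ne_atTop 0] with m hm
        rw [Nat.cast_add]
        refine div_le_div_add_of_add_le (Nat.pos_of_ne_zero hm) ?_
          (abs_Jn_le π' hp hlam hK y m)
        rw [Nat.add_comm m r]
        exact Jn_add_le π hp hlam hK x v₀ hv₀ m
    _ = Javg Adm p C lam π x := Filter.limsup_nat_add (fun n : ℕ => Jn Adm p C lam π x n / n) r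

lemma Jopt_lastState_le_Javg (hp : IsTransitionKernel Adm p) (hlam : 0 < lam) (x : S) {r : ℕ}
    (v₀ : Fin r → A × S) (hv₀ : 0 < pathProb Adm p π x (List.ofFn v₀)) :
    Jopt Adm p C lam (lastState x (List.ofFn v₀)) ≤ Javg Adm p C lam π x := by
  obtain ⟨K, hK⟩ := Finite.exists_le fun q : S × A => |C q.1 q.2|
  exact (Jopt_le_Javg _ hp hlam (fun s a => hK (s, a)) _).trans
    (Javg_shiftPolicy_le π hp hlam (fun s a => hK (s, a)) x v₀ hv₀)

lemma xi1_le_sub {u v : S} (h : Jopt Adm p C lam u < Jopt Adm p C lam v) :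
    xi1 Adm p C lam ≤ Jopt Adm p C lam v - Jopt Adm p C lam u := by
  rw [xi1, if_neg fun hconst => h.ne (hconst u v)]
  refine csInf_le ?_ ⟨u, v, h, rfl⟩
  refine ((Set.finite_range fun q : S × S =>
    Jopt Adm p C lam q.2 - Jopt Adm p C lam q.1).subset ?_).bddBelow
  rintro d ⟨u', v', -, rfl⟩
  exact ⟨(u', v'), rfl⟩

end AverageCost

theorem stays_at_minimum
    (hp : ∀ (x : S), ∀ a ∈ Adm x, (∀ y, 0 ≤ p x a y) ∧ (∑ y, p x a y) = 1)
    (hlam : 0 < lam) (α : ℝ)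
    (β : ℝ)
    (x : S) (hx : Jopt Adm p C lam x = ⨅ y : S, Jopt Adm p C lam y)
    (ε : ℝ) (hε : ε ∈ Set.Ioo 0 (xi Adm p C lam α β))
    (π : Policy S A Adm) (hopt : EpsOptimalAt Adm p C lam π x ε) (r : ℕ) :
    cylProb Adm p π x r
      (fun v => Jopt Adm p C lam (stateAt x (List.ofFn v) r) =
        ⨅ y : S, Jopt Adm p C lam y) = 1 := by
  refine cylProb_eq_one_of_pathProb_ne_zero π (fun x a ha => (hp x a ha).2) fun v hv => ?_
  have hreach : Jopt Adm p C lam (lastState x (List.ofFn v)) ≤ Jopt Adm p C lam x + ε :=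
    (Jopt_lastState_le_Javg π hp hlam x v
      ((pathProb_nonneg π (fun x a ha => (hp x a ha).1) x _).lt_of_ne' hv)).trans hopt
  have hmin :=
    ciInf_le (Set.finite_range (Jopt Adm p C lam)).bddBelow (lastState x (List.ofFn v))
  rw [stateAt_ofFn]
  by_contra hne
  have hgap := xi1_le_sub (hx ▸ hmin.lt_of_ne' hne)
  have hε_lt : ε < xi1 Adm p C lam := hε.2.trans_le (min_le_right _ _)
  linarith

end RiskSensitive
end
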